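/- arXiv:1611.09234 — 5 statements merged into one kernel-verified Lean document; each statement's English description precedes it below -/
import Mathlib

section
/- Every 1-Segal simplicial set is 2-Segal: if X• is a simplicial set such that all Segal maps X_n → X_1 ×_{X_0} ⋯ ×_{X_0} X_1 are bijections, then for every n ≥ 3 and every 0 ≤ i < j ≤ n the map X_n → X_{{i,...,j}} ×_{X_{{i,j}}} X_{{0,...,i,j,...,n}} induced by the inclusions {i,...,j} ↪ [n] and {0,...,i,j,...,n} ↪ [n] is a bijection. -/
open CategoryTheory Simplicial SimplexCategory Opposite

namespace RelSegal

/-- The morphism `[m] ⟶ [n]` in the simplex category determined by a monotone `ℕ`-valued map. -/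
def natHom (m n : ℕ) (f : ℕ → ℕ) (hf : Monotone f) (h : f m ≤ n) :
    (⦋m⦌ : SimplexCategory) ⟶ ⦋n⦌ :=
  SimplexCategory.mkHom
    { toFun := fun k => ⟨f k.1, by have := hf (Nat.lt_succ_iff.mp k.2); omega⟩
      monotone' := fun a b hab => by
        simp only [Fin.mk_le_mk]; exact hf hab }

/-- Restriction of simplices along a morphism of the simplex category. -/
def rmap (X : SSet) {m n : ℕ} (φ : (⦋m⦌ : SimplexCategory) ⟶ ⦋n⦌) :
    X.obj (op ⦋n⦌) → X.obj (op ⦋m⦌) := X.map φ.op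

/-- The inclusion of the vertex `i` of `[n]`. -/
def vert (n i : ℕ) (h : i ≤ n) : (⦋0⦌ : SimplexCategory) ⟶ ⦋n⦌ :=
  natHom 0 n (fun _ => i) monotone_const h

/-- The inclusion of the edge `{i,j}` of `[n]`. -/
def edge (n i j : ℕ) (hij : i ≤ j) (hj : j ≤ n) : (⦋1⦌ : SimplexCategory) ⟶ ⦋n⦌ :=
  natHom 1 n (fun k => i + k * (j - i))
    (fun a b hab => by
      have := Nat.mul_le_mul_right (j - i) hab
      show i + a * (j - i) ≤ i + b * (j - i); omega)
    (by show i + 1 * (j - i) ≤ n; omega)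

/-- The inclusion of the interval `{i, i+1, …, j}` of `[n]`. -/
def interval (n i j : ℕ) (hij : i ≤ j) (hj : j ≤ n) : (⦋j - i⦌ : SimplexCategory) ⟶ ⦋n⦌ :=
  natHom (j - i) n (fun k => i + k) (fun a b hab => by show i + a ≤ i + b; omega)
    (by show i + (j - i) ≤ n; omega)

/-- A commutative square of sets which is a pullback: the canonical map into the fibre
product is a bijection. -/
def IsSetPullback {A B C D : Type*} (p : A → B) (q : A → C) (g : B → D) (h : C → D) : Prop :=
  (∀ a, g (p a) = h (q a)) ∧ ∀ b c, g b = h c → ∃! a, p a = b ∧ q a = c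

/-- A simplicial set is `1`-Segal if for every `n ≥ 2` the Segal map
`X_n → X_1 ×_{X_0} ⋯ ×_{X_0} X_1` is a bijection (injectivity together with
surjectivity onto the compatible families). -/
def Is1Segal (X : SSet) : Prop :=
  ∀ n, 2 ≤ n →
    (∀ x y : X.obj (op ⦋n⦌),
      (∀ i (hi : i + 1 ≤ n),
        rmap X (edge n i (i + 1) (by omega) hi) x = rmap X (edge n i (i + 1) (by omega) hi) y) →
      x = y) ∧
    (∀ f : ∀ i, i + 1 ≤ n → X.obj (op ⦋1⦌),
      (∀ i (h1 : i + 1 ≤ n) (h2 : (i + 1) + 1 ≤ n),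
        rmap X (vert 1 1 le_rfl) (f i h1) = rmap X (vert 1 0 (by omega)) (f (i + 1) h2)) →
      ∃ x : X.obj (op ⦋n⦌), ∀ i (hi : i + 1 ≤ n),
        rmap X (edge n i (i + 1) (by omega) hi) x = f i hi)

/-- The inclusion of the subset `{0, …, i, j, …, n}` of `[n]`. -/
def outer (n i j : ℕ) (hij : i < j) (hj : j ≤ n) :
    (⦋n - j + i + 1⦌ : SimplexCategory) ⟶ ⦋n⦌ :=
  natHom (n - j + i + 1) n (fun k => if k ≤ i then k else k + (j - i - 1))
    (fun a b hab => by dsimp only; split_ifs <;> omega)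
    (by (try dsimp only); split_ifs <;> omega)

/-- A simplicial set is `2`-Segal if for every `n ≥ 3` and `0 ≤ i < j ≤ n` the map
`X_n → X_{{i,…,j}} ×_{X_{{i,j}}} X_{{0,…,i,j,…,n}}` is a bijection. -/
def Is2Segal (X : SSet) : Prop :=
  ∀ n i j (_ : 3 ≤ n) (hij : i < j) (hj : j ≤ n),
    IsSetPullback
      (rmap X (interval n i j hij.le hj))
      (rmap X (outer n i j hij hj))
      (rmap X (edge (j - i) 0 (j - i) (Nat.zero_le _) le_rfl))
      (rmap X (edge (n - j + i + 1) i (i + 1) (by omega) (by omega)))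


/-! In a 1-Segal simplicial set a simplex is determined by its spine, and every compatible
family of edges is the spine of a simplex. The spine of `[n]` is covered by the spine of
`{i, …, j}` and the spine of `{0, …, i, j, …, n}` minus its edge `{i, j}`. So a pair `(b, c)`
agreeing on the edge `{i, j}` determines a family of edges of `[n]`, compatible because at the
seams `i` and `j` the vertices of `b` and `c` are those of that common edge; the glued simplex
restricts to `b` and `c` since both are again determined by their spines. -/

lemma natHom_ext {m n : ℕ} {f g : ℕ → ℕ} {hf : Monotone f} {hg : Monotone g} {hfm : f m ≤ n}
    {hgm : g m ≤ n} (hfg : ∀ k ≤ m, f k = g k) : natHom m n f hf hfm = natHom m n g hg hgm := by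
  ext k : 3
  exact Fin.ext (hfg k (Nat.lt_succ_iff.mp k.2))

lemma natHom_comp_natHom {l m n : ℕ} {f g : ℕ → ℕ} (hg : Monotone g) (hf : Monotone f)
    (hgl : g l ≤ m) (hfm : f m ≤ n) :
    natHom l m g hg hgl ≫ natHom m n f hf hfm =
      natHom l n (f ∘ g) (hf.comp hg) ((hf hgl).trans hfm) :=
  rfl

lemma natHom_id (m : ℕ) : natHom m m id monotone_id le_rfl = 𝟙 ⦋m⦌ := rfl

lemma edge_comp_natHom {m n a b a' b' : ℕ} (hab : a ≤ b) (hbm : b ≤ m) {f : ℕ → ℕ}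
    (hf : Monotone f) (hfm : f m ≤ n) (ha : f a = a') (hb : f b = b') (hab' : a' ≤ b')
    (hb'n : b' ≤ n) :
    edge m a b hab hbm ≫ natHom m n f hf hfm = edge n a' b' hab' hb'n := by
  subst ha hb
  refine (natHom_comp_natHom _ _ _ _).trans (natHom_ext fun k hk => ?_)
  interval_cases k
  · simp
  · simp [Nat.add_sub_cancel' hab, Nat.add_sub_cancel' hab']

lemma edge_zero_one : edge 1 0 (0 + 1) le_add_self le_rfl = 𝟙 ⦋1⦌ :=
  (natHom_ext fun k hk => by simp).trans (natHom_id 1)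

lemma vert_zero_comp_edge {n a b : ℕ} (hab : a ≤ b) (hbn : b ≤ n) :
    vert 1 0 zero_le_one ≫ edge n a b hab hbn = vert n a (hab.trans hbn) :=
  (natHom_comp_natHom _ _ _ _).trans (natHom_ext fun _ _ => by simp)

lemma vert_one_comp_edge {n a b : ℕ} (hab : a ≤ b) (hbn : b ≤ n) :
    vert 1 1 le_rfl ≫ edge n a b hab hbn = vert n b hbn :=
  (natHom_comp_natHom _ _ _ _).trans (natHom_ext fun _ _ => by simp [Nat.add_sub_cancel' hab])

variable {X : SSet}

lemma rmap_rmap {l m n : ℕ} (φ : (⦋l⦌ : SimplexCategory) ⟶ ⦋m⦌)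
    (ψ : (⦋m⦌ : SimplexCategory) ⟶ ⦋n⦌) (x : X.obj (op ⦋n⦌)) :
    rmap X φ (rmap X ψ x) = rmap X (φ ≫ ψ) x := by
  simp only [rmap, op_comp, Functor.map_comp_apply]

lemma rmap_id {m : ℕ} (x : X.obj (op ⦋m⦌)) : rmap X (𝟙 ⦋m⦌) x = x := by
  simp only [rmap, op_id, Functor.map_id_apply]

section

variable {n i j : ℕ} (hij : i < j) (hj : j ≤ n)

lemma edge_comp_interval {a b a' b' : ℕ} (hab : a ≤ b) (hb : b ≤ j - i) (ha : i + a = a')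
    (hb' : i + b = b') (hab' : a' ≤ b') (hb'n : b' ≤ n) :
    edge (j - i) a b hab hb ≫ interval n i j hij.le hj = edge n a' b' hab' hb'n :=
  edge_comp_natHom hab hb _ _ ha hb' hab' hb'n

lemma edge_comp_outer {a b a' b' : ℕ} (hab : a ≤ b) (hb : b ≤ n - j + i + 1)
    (ha : (if a ≤ i then a else a + (j - i - 1)) = a')
    (hb' : (if b ≤ i then b else b + (j - i - 1)) = b') (hab' : a' ≤ b') (hb'n : b' ≤ n) :
    edge (n - j + i + 1) a b hab hb ≫ outer n i j hij hj = edge n a' b' hab' hb'n :=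
  edge_comp_natHom hab hb _ _ ha hb' hab' hb'n

theorem rmap_edge_rmap_interval_eq_rmap_edge_rmap_outer (x : X.obj (op ⦋n⦌)) :
    rmap X (edge (j - i) 0 (j - i) (Nat.zero_le _) le_rfl) (rmap X (interval n i j hij.le hj) x) =
      rmap X (edge (n - j + i + 1) i (i + 1) (by omega) (by omega))
        (rmap X (outer n i j hij hj) x) := by
  rw [rmap_rmap, rmap_rmap,
    edge_comp_interval hij hj _ _ (add_zero i) (Nat.add_sub_cancel' hij.le) hij.le hj,
    edge_comp_outer hij hj _ _ (if_pos le_rfl) (by split_ifs <;> omega) hij.le hj]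

end

def gluedSpine {n i j : ℕ} (b : X.obj (op ⦋j - i⦌)) (c : X.obj (op ⦋n - j + i + 1⦌)) (k : ℕ)
    (hk : k + 1 ≤ n) : X.obj (op ⦋1⦌) :=
  if _ : k < i then rmap X (edge _ k (k + 1) (Nat.le_succ k) (by omega)) c
  else if _ : k < j then rmap X (edge _ (k - i) (k - i + 1) (Nat.le_succ _) (by omega)) b
  else rmap X (edge _ (k + i + 1 - j) (k + i + 1 - j + 1) (Nat.le_succ _) (by omega)) c

theorem gluedSpine_compat {n i j : ℕ} (hij : i < j) {b : X.obj (op ⦋j - i⦌)}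
    {c : X.obj (op ⦋n - j + i + 1⦌)}
    (hbc : rmap X (edge (j - i) 0 (j - i) (Nat.zero_le _) le_rfl) b =
      rmap X (edge (n - j + i + 1) i (i + 1) (by omega) (by omega)) c)
    (k : ℕ) (hk : k + 1 ≤ n) (hk' : k + 1 + 1 ≤ n) :
    rmap X (vert 1 1 le_rfl) (gluedSpine b c k hk) =
      rmap X (vert 1 0 zero_le_one) (gluedSpine b c (k + 1) hk') := by
  have hb0 := congrArg (rmap X (vert 1 0 zero_le_one)) hbc
  have hb1 := congrArg (rmap X (vert 1 1 le_rfl)) hbc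
  simp only [rmap_rmap, vert_zero_comp_edge, vert_one_comp_edge] at hb0 hb1
  unfold gluedSpine
  split_ifs <;> simp only [rmap_rmap, vert_zero_comp_edge, vert_one_comp_edge] <;>
    -- away from the seams both vertices come from the same face; at `k + 1 = i` and
    -- `k + 1 = j` they are the endpoints of the common edge `{i, j}`
    first
    | omega
    | (congr 3; omega)
    | (convert hb0.symm using 3 <;> omega)
    | (convert hb1 using 3 <;> omega)

namespace Is1Segal

theorem ext_of_spine (hX : Is1Segal X) {p : ℕ} (hp : 1 ≤ p) {x y : X.obj (op ⦋p⦌)}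
    (h : ∀ k (hk : k + 1 ≤ p), rmap X (edge p k (k + 1) (Nat.le_succ k) hk) x =
      rmap X (edge p k (k + 1) (Nat.le_succ k) hk) y) :
    x = y := by
  obtain rfl | hp := hp.eq_or_lt
  · simpa only [edge_zero_one, rmap_id] using h 0 le_rfl
  · exact (hX p hp).1 x y h

variable {n i j : ℕ} (hij : i < j) (hj : j ≤ n)

theorem eq_of_rmap_interval_eq_of_rmap_outer_eq (hX : Is1Segal X) {x y : X.obj (op ⦋n⦌)}
    (hint : rmap X (interval n i j hij.le hj) x = rmap X (interval n i j hij.le hj) y)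
    (hout : rmap X (outer n i j hij hj) x = rmap X (outer n i j hij hj) y) : x = y := by
  refine hX.ext_of_spine (by omega) fun k hk => ?_
  rcases lt_or_ge k i with hki | hik
  · rw [← edge_comp_outer hij hj (a := k) (b := k + 1) (Nat.le_succ k) (by omega)
      (by split_ifs <;> omega) (by split_ifs <;> omega), ← rmap_rmap, ← rmap_rmap, hout]
  rcases lt_or_ge k j with hkj | hjk
  · rw [← edge_comp_interval hij hj (a := k - i) (b := k - i + 1) (Nat.le_succ _) (by omega)
      (by omega) (by omega), ← rmap_rmap, ← rmap_rmap, hint]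
  · rw [← edge_comp_outer hij hj (a := k + i + 1 - j) (b := k + i + 1 - j + 1) (Nat.le_succ _)
      (by omega) (by split_ifs <;> omega) (by split_ifs <;> omega), ← rmap_rmap, ← rmap_rmap,
      hout]

theorem exists_rmap_interval_eq_and_rmap_outer_eq (hX : Is1Segal X) (hn : 2 ≤ n)
    {b : X.obj (op ⦋j - i⦌)} {c : X.obj (op ⦋n - j + i + 1⦌)}
    (hbc : rmap X (edge (j - i) 0 (j - i) (Nat.zero_le _) le_rfl) b =
      rmap X (edge (n - j + i + 1) i (i + 1) (by omega) (by omega)) c) :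
    ∃ x, rmap X (interval n i j hij.le hj) x = b ∧ rmap X (outer n i j hij hj) x = c := by
  obtain ⟨x, hx⟩ := (hX n hn).2 (gluedSpine b c) (gluedSpine_compat hij hbc)
  have hxb : rmap X (interval n i j hij.le hj) x = b := by
    refine hX.ext_of_spine (by omega) fun k hk => ?_
    rw [rmap_rmap, edge_comp_interval hij hj (a' := i + k) (b' := i + k + 1) _ _ rfl rfl
      (Nat.le_succ _) (by omega), hx, gluedSpine, dif_neg (by omega), dif_pos (by omega)]
    congr 3 <;> omega
  refine ⟨x, hxb, hX.ext_of_spine (by omega) fun k hk => ?_⟩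
  rw [rmap_rmap]
  rcases lt_trichotomy k i with hki | rfl | hik
  · rw [edge_comp_outer hij hj (a' := k) (b' := k + 1) _ _ (if_pos (by omega))
      (if_pos (by omega)) (Nat.le_succ k) (by omega), hx, gluedSpine, dif_pos hki]
  · -- the edge `{i, i + 1}` of the outer face is the edge `{i, j}` of `[n]`, seen by `b`
    rw [edge_comp_outer hij hj (a' := k) (b' := j) _ _ (if_pos le_rfl) (by split_ifs <;> omega)
      hij.le hj, ← edge_comp_interval hij hj (Nat.zero_le _) le_rfl (by omega) (by omega),
      ← rmap_rmap, hxb, hbc]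
  · rw [edge_comp_outer hij hj (a' := k + (j - i - 1)) (b' := k + (j - i - 1) + 1) _ _
      (if_neg (by omega)) (by split_ifs <;> omega) (Nat.le_succ _) (by omega), hx, gluedSpine,
      dif_neg (by omega), dif_neg (by omega)]
    congr 3 <;> omega

end Is1Segal

/-- every 1-Segal simplicial set is 2-Segal. -/
theorem statement3 (X : SSet) (hX : Is1Segal X) : Is2Segal X := by
  intro n i j hn hij hj
  refine ⟨rmap_edge_rmap_interval_eq_rmap_edge_rmap_outer hij hj, fun b c hbc => ?_⟩
  obtain ⟨x, hxb, hxc⟩ := hX.exists_rmap_interval_eq_and_rmap_outer_eq hij hj (by omega) hbc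
  exact ⟨x, ⟨hxb, hxc⟩, fun y ⟨hyb, hyc⟩ =>
    hX.eq_of_rmap_interval_eq_of_rmap_outer_eq hij hj (hyb.trans hxb.symm) (hyc.trans hxc.symm)⟩

end RelSegal
end

section
/- Let (𝒞, P, Θ) be a small category with duality, T : 𝒞 → 𝒞 an endofunctor, and λ : P ⇒ T ∘ P ∘ T^op a natural transformation satisfying TP(λ_x) ∘ λ_{PT(x)} ∘ Θ_{T(x)} = T(Θ_x) for all objects x. For an object (x_0 → x_1 → ⋯ → x_n → T(x_0)) of the twisted cyclic nerve NC_n^T(𝒞), define P_n to send it to (P(x_n) → ⋯ → P(x_0) → TP(x_n)) where the last map is TP(f_n) ∘ λ_{x_0}. Then Θ_{n,x•} = (Θ_{x_0}, …, Θ_{x_n}) defines a morphism x• → P_n² (x•) in NC_n^T(𝒞); in particular the square expressing compatibility of the last arrows, P*²(f_n) ∘ Θ_{x_n} = T(Θ_{x_0}) ∘ f_n, commutes, where P*²(f_n) = TP(λ_{x_0}) ∘ TPTP(f_n) ∘ λ_{P(x_n)}. -/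
open CategoryTheory Opposite

namespace TwistedNerveStmt

/-- let `(C, P, Θ)` be a category with duality, `T : C ⥤ C` an endofunctor
and `λ : P ⟶ T ∘ P ∘ Tᵒᵖ` a natural transformation satisfying
`TP(λ_x) ∘ λ_{PT(x)} ∘ Θ_{T(x)} = T(Θ_x)`.  Then for every object
`x₀ → x₁ → ⋯ → xₙ → T(x₀)` of the twisted cyclic nerve `NCₙᵀ(C)`, the componentwise
double-dual maps `(Θ_{x₀}, …, Θ_{xₙ})` define a morphism `x• ⟶ Pₙ²(x•)`: the inner
squares commute by naturality of `Θ`, and the square for the last arrow commutes: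
`P*²(fₙ) ∘ Θ_{xₙ} = T(Θ_{x₀}) ∘ fₙ`, where
`P*²(fₙ) = TP(λ_{x₀}) ∘ TPTP(fₙ) ∘ λ_{P(xₙ)}`. -/
theorem statement14 (C : Type u) [Category.{v} C]
    (P : Cᵒᵖ ⥤ C) (Θ : 𝟭 C ≅ P.rightOp ⋙ P)
    (hdual : ∀ U : C,
      Θ.hom.app (P.obj (op U)) ≫ P.map (Θ.hom.app U).op = 𝟙 (P.obj (op U)))
    (T : C ⥤ C) (lam : P ⟶ T.op ⋙ P ⋙ T)
    (hcompat : ∀ x : C,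
      Θ.hom.app (T.obj x) ≫ lam.app (op (P.obj (op (T.obj x)))) ≫
          T.map (P.map (lam.app (op x)).op) =
        T.map (Θ.hom.app x)) :
    -- the inner squares of the morphism `Θ_{n,x•} : x• ⟶ Pₙ²(x•)` commute:
    (∀ (x y : C) (f : x ⟶ y),
      f ≫ Θ.hom.app y = Θ.hom.app x ≫ P.map (P.map f.op).op) ∧
    -- and the square for the last arrow `fₙ : xₙ ⟶ T(x₀)` commutes:
    (∀ (x₀ xₙ : C) (fₙ : xₙ ⟶ T.obj x₀),
      Θ.hom.app xₙ ≫ lam.app (op (P.obj (op xₙ))) ≫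
          T.map (P.map (T.map (P.map fₙ.op)).op) ≫ T.map (P.map (lam.app (op x₀)).op) =
        fₙ ≫ T.map (Θ.hom.app x₀)) := by
  constructor
  · intro x y f
    exact Θ.hom.naturality f
  · intro x₀ xₙ fₙ
    have hlam := lam.naturality (P.map fₙ.op).op
    -- hlam : P.map (P.map fₙ.op).op ≫ lam.app (op (P.obj (op (T.obj x₀)))) =
    --        lam.app (op (P.obj (op xₙ))) ≫ T.map (P.map (T.map (P.map fₙ.op)).op)
    have hΘ := Θ.hom.naturality fₙ
    simp only [Functor.comp_map, Functor.op_map, Quiver.Hom.unop_op, Functor.id_map] at hlam hΘ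
    calc Θ.hom.app xₙ ≫ lam.app (op (P.obj (op xₙ))) ≫
          T.map (P.map (T.map (P.map fₙ.op)).op) ≫ T.map (P.map (lam.app (op x₀)).op)
        = Θ.hom.app xₙ ≫ (lam.app (op (P.obj (op xₙ))) ≫
            T.map (P.map (T.map (P.map fₙ.op)).op)) ≫ T.map (P.map (lam.app (op x₀)).op) := by
          simp only [Category.assoc]
      _ = Θ.hom.app xₙ ≫ (P.map (P.map fₙ.op).op ≫
            lam.app (op (P.obj (op (T.obj x₀))))) ≫ T.map (P.map (lam.app (op x₀)).op) := by
          rw [← hlam]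
      _ = (Θ.hom.app xₙ ≫ P.map (P.map fₙ.op).op) ≫
            lam.app (op (P.obj (op (T.obj x₀)))) ≫ T.map (P.map (lam.app (op x₀)).op) := by
          simp only [Category.assoc]
      _ = (fₙ ≫ Θ.hom.app (T.obj x₀)) ≫
            lam.app (op (P.obj (op (T.obj x₀)))) ≫ T.map (P.map (lam.app (op x₀)).op) := by
          exact congrArg (· ≫ _) hΘ.symm
      _ = fₙ ≫ T.map (Θ.hom.app x₀) := by
          rw [Category.assoc, hcompat x₀]

end TwistedNerveStmt
end

section
/- Let G be a group, E a G-set, and H ≤ G a subgroup. For each n let S_n(G,E) denote the action groupoid G ⫽ E^{n+1} (objects E^{n+1}, morphisms (e•) → (e'•) are g ∈ G with g·e• = e'•). Then for every n ≥ 2 and every 0 ≤ i ≤ n the functor S_n(H,E) → S_{{0,...,i}}(H,E) ×^{(2)}_{S_{{i}}(H,E)} S_{{i,...,n}}(G,E), induced by the inclusion H ↪ G and the face maps projecting onto the indicated coordinate intervals, is an equivalence of groupoids (where ×^{(2)} denotes the 2-pullback/iso-comma of groupoids); similarly with the roles of H and G in the two factors exchanged. In particular the Hecke–Waldhausen morphism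 S•(H,E) → S•(G,E) is both left and right relative 1-Segal at the level of groupoids. -/
open CategoryTheory

namespace HeckeWaldhausen

universe u v

/-- The action groupoid `G ⫽ X`: objects are elements of `X`, morphisms `x ⟶ y` are
group elements `g` with `g • x = y`. -/
def AGpd (G : Type u) [Group G] (X : Type v) [MulAction G X] := X

variable {G : Type u} [Group G] {X : Type v} [MulAction G X]

instance : MulAction G (AGpd G X) := inferInstanceAs (MulAction G X)

instance : Category (AGpd G X) where
  Hom a b := {g : G // g • a = b}
  id a := ⟨1, one_smul _ _⟩
  comp f g := ⟨g.1 * f.1, by rw [mul_smul, f.2, g.2]⟩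
  id_comp f := Subtype.ext (mul_one _)
  comp_id f := Subtype.ext (one_mul _)
  assoc f g h := Subtype.ext (mul_assoc _ _ _).symm

/-- The functor between action groupoids induced by a group homomorphism `φ` and an
equivariant map `u`. -/
def actFunctor {H : Type*} [Group H] {A : Type*} [MulAction H A]
    (φ : H →* G) (u : A → X) (hu : ∀ (h : H) (a : A), u (h • a) = φ h • u a) :
    AGpd H A ⥤ AGpd G X where
  obj := u
  map {a b} f := ⟨φ f.1, (hu f.1 a).symm.trans (congrArg u f.2)⟩
  map_id a := Subtype.ext (map_one φ)
  map_comp f g := Subtype.ext (map_mul φ _ _)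

/-- The 2-pullback (iso-comma category) of two functors. -/
structure TwoPullback {A : Type*} {B : Type*} {C : Type*}
    [Category A] [Category B] [Category C] (F : A ⥤ C) (G : B ⥤ C) where
  left : A
  right : B
  iso : F.obj left ≅ G.obj right

instance {A B C : Type*} [Category A] [Category B] [Category C]
    (F : A ⥤ C) (G : B ⥤ C) : Category (TwoPullback F G) where
  Hom p q := {fg : (p.left ⟶ q.left) × (p.right ⟶ q.right) //
    F.map fg.1 ≫ q.iso.hom = p.iso.hom ≫ G.map fg.2}
  id p := ⟨(𝟙 _, 𝟙 _), by simp⟩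
  comp f g := ⟨(f.1.1 ≫ g.1.1, f.1.2 ≫ g.1.2), by
    rw [Functor.map_comp, Functor.map_comp, Category.assoc, g.2, ← Category.assoc, f.2,
      Category.assoc]⟩
  id_comp f := Subtype.ext (Prod.ext (Category.id_comp _) (Category.id_comp _))
  comp_id f := Subtype.ext (Prod.ext (Category.comp_id _) (Category.comp_id _))
  assoc f g h := Subtype.ext (Prod.ext (Category.assoc _ _ _) (Category.assoc _ _ _))

section

variable (G) (E : Type u) [MulAction G E] (H : Subgroup G) (n i : ℕ) (hi : i ≤ n)

/-- `S_{{0,…,i}} → S_{{i}}`: evaluation at the last vertex, over the inclusion `φ`. -/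
def evLast {K : Type*} [Group K] [MulAction K E] (φ : K →* G)
    (hφ : ∀ (k : K) (x : E), k • x = φ k • x) :
    AGpd K (Fin (i + 1) → E) ⥤ AGpd G E :=
  actFunctor φ (fun e => e ⟨i, Nat.lt_succ_self i⟩) (fun k e => hφ k (e ⟨i, Nat.lt_succ_self i⟩))

/-- `S_{{i,…,n}} → S_{{i}}`: evaluation at the first vertex, over the inclusion `φ`. -/
def evFirst {K : Type*} [Group K] [MulAction K E] (φ : K →* G)
    (hφ : ∀ (k : K) (x : E), k • x = φ k • x) :
    AGpd K (Fin (n - i + 1) → E) ⥤ AGpd G E :=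
  actFunctor φ (fun e => e ⟨0, Nat.succ_pos _⟩) (fun k e => hφ k (e ⟨0, Nat.succ_pos _⟩))

/-- The comparison functor
`S_n(H,E) ⟶ S_{{0,…,i}}(H,E) ×⁽²⁾_{S_{{i}}} S_{{i,…,n}}(G,E)`. -/
def cmp₁ : AGpd (↥H) (Fin (n + 1) → E) ⥤
    TwoPullback (evLast G E i H.subtype (fun _ _ => rfl)) (evFirst G E n i (MonoidHom.id G) (fun _ _ => rfl)) where
  obj e :=
    { left := fun j : Fin (i + 1) => e ⟨j.1, by omega⟩
      right := fun j : Fin (n - i + 1) => e ⟨i + j.1, by omega⟩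
      iso := Iso.refl _ }
  map {e e'} f :=
    ⟨(⟨f.1, funext fun j => congrFun f.2 _⟩, ⟨H.subtype f.1, funext fun j => congrFun f.2 _⟩),
      Subtype.ext ((one_mul _).trans (mul_one _).symm)⟩
  map_id e := Subtype.ext (Prod.ext (Subtype.ext rfl) (Subtype.ext (map_one H.subtype)))
  map_comp f g := Subtype.ext (Prod.ext (Subtype.ext rfl) (Subtype.ext (map_mul H.subtype _ _)))

/-- The comparison functor with the roles of `H` and `G` in the two factors exchanged:
`S_n(H,E) ⟶ S_{{0,…,i}}(G,E) ×⁽²⁾_{S_{{i}}} S_{{i,…,n}}(H,E)`. -/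
def cmp₂ : AGpd (↥H) (Fin (n + 1) → E) ⥤
    TwoPullback (evLast G E i (MonoidHom.id G) (fun _ _ => rfl)) (evFirst G E n i H.subtype (fun _ _ => rfl)) where
  obj e :=
    { left := fun j : Fin (i + 1) => e ⟨j.1, by omega⟩
      right := fun j : Fin (n - i + 1) => e ⟨i + j.1, by omega⟩
      iso := Iso.refl _ }
  map {e e'} f :=
    ⟨(⟨H.subtype f.1, funext fun j => congrFun f.2 _⟩, ⟨f.1, funext fun j => congrFun f.2 _⟩),
      Subtype.ext ((one_mul _).trans (mul_one _).symm)⟩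
  map_id e := Subtype.ext (Prod.ext (Subtype.ext (map_one H.subtype)) (Subtype.ext rfl))
  map_comp f g := Subtype.ext (Prod.ext (Subtype.ext (map_mul H.subtype _ _)) (Subtype.ext rfl))

end

/-! An `n`-simplex is glued from its front face on `{0,…,i}` and its back face on `{i,…,n}`,
which share the vertex `i`. An object `(a, b, γ)` of the 2-pullback is isomorphic to the image
of the simplex glued from `a` and `γ⁻¹ • b` (from `γ • a` and `b` when the `G`-factor is on the
left), the isomorphism being `γ` on the factor over `G`. On morphisms, the compatibility square
between identity isomorphisms forces the two group elements to coincide, so a morphism of the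
2-pullback comes from a unique element of `H` acting on the whole simplex. -/

namespace AGpd

variable {G : Type u} [Group G] {X : Type v} [MulAction G X]

@[ext]
lemma hom_ext {a b : AGpd G X} {f g : a ⟶ b} (h : f.1 = g.1) : f = g :=
  Subtype.ext h

def isoMk {a b : AGpd G X} (g : G) (h : g • a = b) : a ≅ b where
  hom := ⟨g, h⟩
  inv := ⟨g⁻¹, by rw [← h, inv_smul_smul]⟩
  hom_inv_id := Subtype.ext (inv_mul_cancel g)
  inv_hom_id := Subtype.ext (mul_inv_cancel g)

end AGpd

namespace TwoPullback

variable {A B C : Type*} [Category A] [Category B] [Category C] {F : A ⥤ C} {K : B ⥤ C}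

def isoMk {p q : TwoPullback F K} (α : p.left ≅ q.left) (β : p.right ≅ q.right)
    (w : F.map α.hom ≫ q.iso.hom = p.iso.hom ≫ K.map β.hom) : p ≅ q where
  hom := ⟨(α.hom, β.hom), w⟩
  inv := ⟨(α.inv, β.inv), by
    dsimp only
    rw [← cancel_epi (F.map α.hom), ← F.map_comp_assoc, α.hom_inv_id, F.map_id,
      Category.id_comp, reassoc_of% w, ← K.map_comp, β.hom_inv_id, K.map_id, Category.comp_id]⟩
  hom_inv_id := Subtype.ext (Prod.ext α.hom_inv_id β.hom_inv_id)
  inv_hom_id := Subtype.ext (Prod.ext α.inv_hom_id β.inv_hom_id)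

end TwoPullback

section Glue

variable {E : Type*} {n i : ℕ}

def frontFace (hi : i ≤ n) (e : Fin (n + 1) → E) : Fin (i + 1) → E :=
  fun j => e ⟨j, by omega⟩

def backFace (hi : i ≤ n) (e : Fin (n + 1) → E) : Fin (n - i + 1) → E :=
  fun j => e ⟨i + j, by omega⟩

def glue (a : Fin (i + 1) → E) (b : Fin (n - i + 1) → E) : Fin (n + 1) → E :=
  fun j => if h : j.1 ≤ i then a ⟨j, by omega⟩ else b ⟨j - i, by omega⟩

variable (hi : i ≤ n)

lemma frontFace_glue (a : Fin (i + 1) → E) (b : Fin (n - i + 1) → E) :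
    frontFace hi (glue a b) = a := by
  funext j
  simp [frontFace, glue, Nat.le_of_lt_succ j.2]

lemma backFace_glue {a : Fin (i + 1) → E} {b : Fin (n - i + 1) → E}
    (hab : a (Fin.last i) = b 0) : backFace hi (glue a b) = b := by
  funext j
  rcases Fin.eq_zero_or_eq_succ j with rfl | ⟨k, rfl⟩
  · simpa [backFace, glue, Fin.last] using hab
  · simp [backFace, glue, Fin.succ]

lemma eq_of_frontFace_eq_of_backFace_eq {e e' : Fin (n + 1) → E}
    (h₁ : frontFace hi e = frontFace hi e') (h₂ : backFace hi e = backFace hi e') : e = e' := by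
  funext j
  by_cases hj : j.1 ≤ i
  · exact congrFun h₁ ⟨j, by omega⟩
  · have hj' : (⟨i + (j - i), by omega⟩ : Fin (n + 1)) = j := Fin.ext (by simp; omega)
    simpa [backFace, hj'] using congrFun h₂ ⟨j - i, by omega⟩

end Glue

section Comparison

variable (G : Type u) [Group G] (E : Type u) [MulAction G E] (H : Subgroup G) {n i : ℕ}
  (hi : i ≤ n)

instance : (cmp₁ G E H n i hi).Faithful where
  map_injective hfg := Subtype.ext (congrArg (fun m => m.1.1.1) hfg)

instance : (cmp₁ G E H n i hi).Full where
  map_surjective {e e'} m := by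
    have hsquare : (1 : G) * m.1.1.1 = m.1.2.1 * 1 := congrArg Subtype.val m.2
    have hm : (m.1.1.1 : G) = m.1.2.1 := by simpa using hsquare
    refine ⟨⟨m.1.1.1, eq_of_frontFace_eq_of_backFace_eq hi m.1.1.2 ?_⟩, ?_⟩
    · exact (congrArg (· • backFace hi e) hm).trans m.1.2.2
    · exact Subtype.ext (Prod.ext rfl (AGpd.hom_ext hm))

instance : (cmp₁ G E H n i hi).EssSurj where
  mem_essImage p := by
    obtain ⟨a, b, γ⟩ := p
    have hab : a (Fin.last i) = (γ.hom.1⁻¹ • b) 0 := eq_inv_smul_iff.mpr γ.hom.2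
    refine ⟨glue a (γ.hom.1⁻¹ • b), ⟨TwoPullback.isoMk
      (AGpd.isoMk 1 ((one_smul _ _).trans (frontFace_glue hi _ _)))
      (AGpd.isoMk γ.hom.1 ?_) (AGpd.hom_ext ?_)⟩⟩
    · exact (congrArg _ (backFace_glue hi hab)).trans (smul_inv_smul _ _)
    · show γ.hom.1 * ((1 : H) : G) = γ.hom.1 * 1
      simp

instance : (cmp₂ G E H n i hi).Faithful where
  map_injective hfg := Subtype.ext (congrArg (fun m => m.1.2.1) hfg)

instance : (cmp₂ G E H n i hi).Full where
  map_surjective {e e'} m := by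
    have hsquare : (1 : G) * m.1.1.1 = m.1.2.1 * 1 := congrArg Subtype.val m.2
    have hm : m.1.1.1 = (m.1.2.1 : G) := by simpa using hsquare
    refine ⟨⟨m.1.2.1, eq_of_frontFace_eq_of_backFace_eq hi ?_ m.1.2.2⟩, ?_⟩
    · exact (congrArg (· • frontFace hi e) hm.symm).trans m.1.1.2
    · exact Subtype.ext (Prod.ext (AGpd.hom_ext hm.symm) rfl)

instance : (cmp₂ G E H n i hi).EssSurj where
  mem_essImage p := by
    obtain ⟨a, b, γ⟩ := p
    refine ⟨glue (γ.hom.1 • a) b, ⟨TwoPullback.isoMk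
      (AGpd.isoMk γ.hom.1⁻¹ ((congrArg _ (frontFace_glue hi _ _)).trans (inv_smul_smul _ _)))
      (AGpd.isoMk 1 ((one_smul _ _).trans (backFace_glue hi γ.hom.2))) (AGpd.hom_ext ?_)⟩⟩
    show γ.hom.1 * γ.hom.1⁻¹ = ((1 : H) : G) * 1
    simp

end Comparison

/-- for a group `G` acting on `E` and a subgroup `H ≤ G`, the comparison
functors `S_n(H,E) → S_{{0,…,i}} ×⁽²⁾_{S_{{i}}} S_{{i,…,n}}` (one factor over `H`, the
other over `G`, in either order) are equivalences of groupoids; i.e. the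
Hecke–Waldhausen morphism `S_•(H,E) → S_•(G,E)` is left and right relative 1-Segal. -/
theorem statement17 (G : Type u) [Group G] (E : Type u) [MulAction G E]
    (H : Subgroup G) :
    ∀ (n i : ℕ) (_ : 2 ≤ n) (hin : i ≤ n),
      (cmp₁ G E H n i hin).IsEquivalence ∧ (cmp₂ G E H n i hin).IsEquivalence :=
  fun _ _ _ hin => ⟨{}, {}⟩

end HeckeWaldhausen
end

section
/- Let 𝒞 be an abelian category, Z : K_0(𝒞) → ℂ a stability function with phase φ(A) ∈ (0,1] for nonzero A, and Φ : 𝒞 → Vect_k a left exact functor (framing). Let (M_0, s_0) be a stable framed object of phase φ (M_0 is Z-semistable of phase φ, s_0 ∈ Φ(M_0), and φ(A) < φ(M_0) for every proper subobject A ⊆ M_0 with s_0 ∈ Φ(A)). Let A ↪ M_0 be an inclusion with A Z-semistable of phase φ, let M_1 = M_0/A (also assumed semistable of phase φ), and let s_1 ∈ Φ(M_1) be the image of s_0 under Φ(M_0) → Φ(M_1). Then (M_1, s_1) is again a stable framed object; in particular s_1 ≠ 0. -/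
/-!
If `s₁` lay in `Φ(B)` for a proper subobject `B ⊂ M₁`, left exactness would put `s₀` in
`Φ(P)` for the preimage `P ⊂ M₀` of `B`, a proper subobject, so `φ(P) < φ`. The sequence
`0 → A → P → B → 0` is exact, so `Z(P) = Z(A) + Z(B)` with `φ(A) = φ`, and the see-saw
property forces `B ≠ 0` and `φ(B) < φ`. Taking `B = 0` gives `s₁ ≠ 0`.
-/

open CategoryTheory Limits Opposite

namespace StableFramedStmt

universe v u w

variable {C : Type u} [Category.{v} C] [Abelian C]

/-- The phase of an object with respect to a stability function `Z` (as a multiple of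
`π`, we use `arg (Z A) ∈ (0, π]` directly). -/
noncomputable def pha (Z : C → ℂ) (A : C) : ℝ := (Z A).arg

/-- `M` is `Z`-semistable: it is nonzero and every nonzero subobject has phase at most
the phase of `M`. -/
def Semistable (Z : C → ℂ) (M : C) : Prop :=
  ¬ IsZero M ∧ ∀ A : Subobject M, ¬ IsZero (A : C) → pha Z (A : C) ≤ pha Z M

open ComplexConjugate in
lemma arg_le_arg_iff_im_conj_mul_nonneg {z w : ℂ} (hz : 0 < z.arg) (hw : 0 < w.arg) :
    z.arg ≤ w.arg ↔ 0 ≤ (conj z * w).im := by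
  have hz₀ : 0 < ‖z‖ := norm_pos_iff.2 fun h => by simp [h] at hz
  have hw₀ : 0 < ‖w‖ := norm_pos_iff.2 fun h => by simp [h] at hw
  have hcross : (conj z * w).im = (‖z‖ * ‖w‖) * Real.sin (w.arg - z.arg) := by
    rw [Complex.mul_im, Complex.conj_re, Complex.conj_im, Real.sin_sub,
      ← Complex.norm_mul_cos_arg z, ← Complex.norm_mul_sin_arg z,
      ← Complex.norm_mul_cos_arg w, ← Complex.norm_mul_sin_arg w]
    ring
  have hzπ := Complex.arg_le_pi z
  have hwπ := Complex.arg_le_pi w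
  rw [hcross, mul_nonneg_iff_of_pos_left (mul_pos hz₀ hw₀)]
  constructor
  · intro h
    exact Real.sin_nonneg_of_nonneg_of_le_pi (by linarith) (by linarith)
  · intro h
    by_contra! hlt
    linarith [Real.sin_neg_of_neg_of_neg_pi_lt (x := w.arg - z.arg) (by linarith) (by linarith)]

open ComplexConjugate in
lemma arg_le_arg_add {z w : ℂ} (hz : 0 < z.arg) (hw : 0 < w.arg) (hzw : 0 < (z + w).arg)
    (h : z.arg ≤ w.arg) : z.arg ≤ (z + w).arg := by
  rw [arg_le_arg_iff_im_conj_mul_nonneg hz hzw, mul_add, Complex.add_im,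
    Complex.conj_mul', ← Complex.ofReal_pow, Complex.ofReal_im, zero_add]
  exact (arg_le_arg_iff_im_conj_mul_nonneg hz hw).1 h

lemma apply_eq_zero_of_isZero {Z : C → ℂ} (hZiso : ∀ (A B : C), (A ≅ B) → Z A = Z B)
    (hZadd : ∀ {A B : C} (f : A ⟶ B) [Mono f], Z B = Z A + Z (cokernel f))
    {X : C} (hX : IsZero X) : Z X = 0 := by
  have hcoker : Z X = Z (cokernel (𝟙 X)) :=
    hZiso _ _ (hX.iso ((isZero_zero C).of_iso (cokernel.ofEpi (𝟙 X))))
  rw [hcoker]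
  exact left_eq_add.mp (hZadd (𝟙 X))

lemma apply_eq_apply_kernel_add_of_epi {Z : C → ℂ} (hZiso : ∀ (A B : C), (A ≅ B) → Z A = Z B)
    (hZadd : ∀ {A B : C} (f : A ⟶ B) [Mono f], Z B = Z A + Z (cokernel f))
    {X Y : C} (g : X ⟶ Y) [Epi g] : Z X = Z (kernel g) + Z Y := by
  have e : cokernel (kernel.ι g) ≅ Y := IsColimit.coconePointUniqueUpToIso
    (cokernelIsCokernel _) (Abelian.epiIsCokernelOfKernel _ (kernelIsKernel g))
  rw [hZadd (kernel.ι g), hZiso _ _ e]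

lemma apply_kernel_cokernelπ {Z : C → ℂ} (hZiso : ∀ (A B : C), (A ≅ B) → Z A = Z B)
    (hZadd : ∀ {A B : C} (f : A ⟶ B) [Mono f], Z B = Z A + Z (cokernel f))
    {A M : C} (ι : A ⟶ M) [Mono ι] : Z (kernel (cokernel.π ι)) = Z A := by
  have h := apply_eq_apply_kernel_add_of_epi hZiso hZadd (cokernel.π ι)
  rw [hZadd ι, add_left_inj] at h
  exact h.symm

lemma apply_pullback_eq_apply_kernel_add {Z : C → ℂ} (hZiso : ∀ (A B : C), (A ≅ B) → Z A = Z B)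
    (hZadd : ∀ {A B : C} (f : A ⟶ B) [Mono f], Z B = Z A + Z (cokernel f))
    {B M N : C} (f : B ⟶ N) (g : M ⟶ N) [Epi g] :
    Z (pullback f g) = Z (kernel g) + Z B := by
  have sq := IsPullback.of_hasPullback f g
  have := isIso_kernel_map_of_isPullback sq
  rw [apply_eq_apply_kernel_add_of_epi hZiso hZadd (pullback.fst f g),
    hZiso _ _ (asIso (kernel.map _ _ _ _ sq.w))]

lemma pha_mk {D : Type*} [Category D] {Z : D → ℂ} (hZiso : ∀ (A B : D), (A ≅ B) → Z A = Z B)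
    {X Y : D} (f : X ⟶ Y) [Mono f] : pha Z (Subobject.mk f : D) = pha Z X :=
  congrArg Complex.arg (hZiso _ _ (Subobject.underlyingIso f))

lemma range_map_mk_arrow {D : Type*} [Category D] (G : D ⥤ Type w) {X Y : D} (f : X ⟶ Y)
    [Mono f] : Set.range (G.map (Subobject.mk f).arrow) = Set.range (G.map f) := by
  rw [← Subobject.underlyingIso_hom_comp_eq_mk, G.map_comp]
  exact (surjective_of_epi (G.map (Subobject.underlyingIso f).hom)).range_comp _

lemma mem_range_map_pullbackSnd {D : Type*} [Category D] (G : D ⥤ Type w) {B M N : D}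
    (f : B ⟶ N) (g : M ⟶ N) [HasPullback f g] [PreservesLimit (cospan f g) G] (x : G.obj M) :
    x ∈ Set.range (G.map (pullback.snd f g)) ↔ G.map g x ∈ Set.range (G.map f) := by
  rw [Types.range_snd_of_isPullback ((IsPullback.of_hasPullback f g).map G)]
  rfl

lemma mk_pullbackSnd_ne_top {M N : C} (g : M ⟶ N) [Epi g] {B : Subobject N} (hB : B ≠ ⊤) :
    Subobject.mk (pullback.snd B.arrow g) ≠ ⊤ := by
  intro h
  have : IsIso (pullback.snd B.arrow g) := (Subobject.isIso_iff_mk_eq_top _).2 h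
  have : Epi (pullback.fst B.arrow g ≫ B.arrow) := by
    rw [pullback.condition]
    infer_instance
  have : Epi B.arrow := epi_of_epi (pullback.fst B.arrow g) B.arrow
  have : IsIso B.arrow := isIso_of_mono_of_epi _
  exact hB (Subobject.eq_top_of_isIso_arrow B)

lemma not_isZero_and_pha_lt_of_mem_range {Z : C → ℂ}
    (hZiso : ∀ (A B : C), (A ≅ B) → Z A = Z B)
    (hZadd : ∀ {A B : C} (f : A ⟶ B) [Mono f], Z B = Z A + Z (cokernel f))
    (hZH : ∀ A : C, ¬ IsZero A → 0 < pha Z A)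
    (G : C ⥤ Type w) [PreservesFiniteLimits G] {M₀ M₁ : C} (s₀ : G.obj M₀)
    (hstab : ∀ A : Subobject M₀, A ≠ ⊤ → s₀ ∈ Set.range (G.map A.arrow) →
      pha Z (A : C) < pha Z M₀)
    (g : M₀ ⟶ M₁) [Epi g] (hK : ¬ IsZero (kernel g)) (hphK : pha Z (kernel g) = pha Z M₀)
    (B : Subobject M₁) (hB : B ≠ ⊤) (hs : G.map g s₀ ∈ Set.range (G.map B.arrow)) :
    ¬ IsZero (B : C) ∧ pha Z (B : C) < pha Z M₀ := by
  set P := pullback B.arrow g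
  have hP : Z P = Z (kernel g) + Z B := apply_pullback_eq_apply_kernel_add hZiso hZadd B.arrow g
  have hPne : ¬ IsZero P := by
    let j : kernel g ⟶ P := pullback.lift 0 (kernel.ι g) (by simp)
    have : Mono j := mono_of_mono_fac (pullback.lift_snd _ _ _)
    exact fun h => hK (h.of_mono j)
  have hPlt : pha Z P < pha Z M₀ := by
    rw [← pha_mk hZiso (pullback.snd B.arrow g)]
    refine hstab _ (mk_pullbackSnd_ne_top g hB) ?_
    rwa [range_map_mk_arrow, mem_range_map_pullbackSnd]
  by_cases hB0 : IsZero (B : C)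
  · rw [apply_eq_zero_of_isZero hZiso hZadd hB0, add_zero] at hP
    exact (hPlt.ne (by rw [← hphK]; exact congrArg Complex.arg hP)).elim
  refine ⟨hB0, lt_of_not_ge fun hge => hPlt.not_ge ?_⟩
  rw [← hphK] at hge ⊢
  simpa only [pha, hP] using arg_le_arg_add (hZH _ hK) (hZH _ hB0) (hP ▸ hZH _ hPne) hge

theorem statement18_general
    (k : Type w) [Field k]
    (Z : C → ℂ)
    (hZiso : ∀ (A B : C), (A ≅ B) → Z A = Z B)
    (hZadd : ∀ {A B : C} (f : A ⟶ B) [Mono f], Z B = Z A + Z (cokernel f))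
    (hZH : ∀ A : C, ¬ IsZero A → Z A ≠ 0 ∧ 0 < (Z A).arg)
    (F : C ⥤ ModuleCat.{w} k) [PreservesFiniteLimits F]
    (φ : ℝ)
    (M₀ : C) (s₀ : F.obj M₀)
    (hphM₀ : pha Z M₀ = φ)
    (hstab : ∀ A : Subobject M₀, A ≠ ⊤ → s₀ ∈ Set.range (F.map A.arrow) →
      pha Z (A : C) < pha Z M₀)
    (A : C) (ι : A ⟶ M₀) [Mono ι]
    (hssA : Semistable Z A) (hphA : pha Z A = φ)
    (hssM₁ : Semistable Z (cokernel ι)) (hphM₁ : pha Z (cokernel ι) = φ) :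
    F.map (cokernel.π ι) s₀ ≠ 0 ∧
      ∀ B : Subobject (cokernel ι), B ≠ ⊤ →
        F.map (cokernel.π ι) s₀ ∈ Set.range (F.map B.arrow) →
        pha Z (B : C) < pha Z (cokernel ι) := by
  have hK : ¬ IsZero (kernel (cokernel.π ι)) := fun h =>
    hssA.1 (h.of_mono (kernel.lift _ ι (cokernel.condition ι)))
  have hphK : pha Z (kernel (cokernel.π ι)) = pha Z M₀ := by
    rw [pha, apply_kernel_cokernelπ hZiso hZadd ι, ← pha, hphA, hphM₀]
  have key := not_isZero_and_pha_lt_of_mem_range hZiso hZadd (fun A hA => (hZH A hA).2)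
    (F ⋙ forget _) s₀ hstab (cokernel.π ι) hK hphK
  refine ⟨fun hs => ?_, fun B hB hs => hphM₁ ▸ hphM₀ ▸ (key B hB hs).2⟩
  have := Subobject.nontrivial_of_not_isZero hssM₁.1
  exact (key ⊥ bot_ne_top ⟨0, (map_zero (F.map _).hom).trans hs.symm⟩).1
    ((isZero_zero C).of_iso Subobject.botCoeIsoZero)

/-- let `Z` be a stability function on an abelian category `C` (additive
on short exact sequences, with values in the upper half plane `ℍ₊` on nonzero objects)
and `Φ = F` a left exact framing functor to vector spaces.  If `(M₀, s₀)` is a stable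
framed object of phase `φ`, `A ↪ M₀` has `A` semistable of phase `φ`, and
`M₁ = M₀/A` is semistable of phase `φ`, then `(M₁, s₁)` is stable framed, where `s₁` is
the image of `s₀`; in particular `s₁ ≠ 0`. -/
theorem statement18
    (k : Type w) [Field k]
    (Z : C → ℂ)
    (hZiso : ∀ (A B : C), (A ≅ B) → Z A = Z B)
    (hZadd : ∀ {A B : C} (f : A ⟶ B) [Mono f], Z B = Z A + Z (cokernel f))
    (hZH : ∀ A : C, ¬ IsZero A → Z A ≠ 0 ∧ 0 < (Z A).arg)
    (F : C ⥤ ModuleCat.{w} k) [F.Additive] [PreservesFiniteLimits F]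
    (φ : ℝ)
    (M₀ : C) (s₀ : F.obj M₀)
    (hssM₀ : Semistable Z M₀) (hphM₀ : pha Z M₀ = φ)
    (hstab : ∀ A : Subobject M₀, A ≠ ⊤ → s₀ ∈ Set.range (F.map A.arrow) →
      pha Z (A : C) < pha Z M₀)
    (A : C) (ι : A ⟶ M₀) [Mono ι]
    (hssA : Semistable Z A) (hphA : pha Z A = φ)
    (hssM₁ : Semistable Z (cokernel ι)) (hphM₁ : pha Z (cokernel ι) = φ) :
    F.map (cokernel.π ι) s₀ ≠ 0 ∧
      ∀ B : Subobject (cokernel ι), B ≠ ⊤ →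
        F.map (cokernel.π ι) s₀ ∈ Set.range (F.map B.arrow) →
        pha Z (B : C) < pha Z (cokernel ι) :=
  statement18_general k Z hZiso hZadd hZH F φ M₀ s₀ hphM₀ hstab A ι hssA hphA hssM₁ hphM₁

end StableFramedStmt
end

section
/- Let Vect_{F1} be the category of finite pointed sets with partial bijections, with the duality P = Hom(−, {*,1}). A symmetric form on the n-element pointed set F1^n is an involution π ∈ S_n, and two symmetric forms are isometric if and only if the involutions are conjugate in S_n; hence isometry classes of symmetric forms on F1^n are in bijection with integers 0 ≤ w ≤ ⌊n/2⌋ (the number of 2-cycles of π), and the isometry group of the form with Witt index w is isomorphic to (Z/2 ≀ S_w) × S_{n−2w}. -/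
/-!
STATEMENT 19: In `Vect_{𝔽₁}` (finite pointed sets and partial bijections) with the
duality `P = Hom(−, {*,1})`, a symmetric form on `𝔽₁ⁿ` is an involution `π ∈ S_n`,
isometry = conjugacy, so isometry classes are classified by the Witt index
`0 ≤ w ≤ ⌊n/2⌋` (the number of 2-cycles, i.e. half the cardinality of the support),
and the isometry group (= centralizer) of the form of Witt index `w` is isomorphic to
`(ℤ/2 ≀ S_w) × S_{n−2w}`.
-/

namespace WreathStmt

/-- The permutation action of `S_w` on `(ℤ/2)^w`. -/
def permHom (w : ℕ) :
    Equiv.Perm (Fin w) →* MulAut (Fin w → Multiplicative (ZMod 2)) where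
  toFun σ := MulEquiv.arrowCongr σ (MulEquiv.refl (Multiplicative (ZMod 2)))
  map_one' := by ext f i; rfl
  map_mul' σ τ := by ext f i; rfl

/-- The wreath product `ℤ/2 ≀ S_w = (ℤ/2)^w ⋊ S_w`. -/
abbrev Wreath (w : ℕ) :=
  (Fin w → Multiplicative (ZMod 2)) ⋊[permHom w] Equiv.Perm (Fin w)

/-! An involution has cycle type `(2, …, 2)`, so involutions are conjugate exactly when their
supports have the same size. Up to conjugation it therefore suffices to study the involution of
`(Fin w × ℤ/2) ⊕ Fin m` that swaps the two sheets of the first summand and fixes the second.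
The wreath product acts on the sheets commuting with the swap and `S_m` acts on the fixed
points, which embeds `(ℤ/2 ≀ S_w) × S_m` into its centralizer; the embedding is onto since both
groups have order `2^w w! m!`, by the formula for the order of the centralizer of a permutation
of given cycle type. -/

open Equiv Equiv.Perm Finset

section Involution

variable {α : Type*} [Fintype α] [DecidableEq α] {σ τ : Perm α}

theorem _root_.Equiv.Perm.cycleType_eq_replicate_of_mul_self_eq_one (hσ : σ * σ = 1) :
    σ.cycleType = Multiset.replicate (#σ.support / 2) 2 := by
  have hrep := cycleType_of_pow_prime_eq_one (p := 2) (by rwa [sq])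
  have hsum : #σ.support = 2 * Multiset.card σ.cycleType := by
    rw [← sum_cycleType, hrep, Multiset.sum_replicate, smul_eq_mul, Multiset.card_replicate,
      mul_comm]
  rw [hrep, hsum, Nat.mul_div_cancel_left _ two_pos]

theorem _root_.Equiv.Perm.isConj_iff_card_support_eq_of_mul_self_eq_one (hσ : σ * σ = 1)
    (hτ : τ * τ = 1) : IsConj σ τ ↔ #σ.support = #τ.support := by
  rw [isConj_iff_cycleType_eq]
  refine ⟨fun h => by rw [← sum_cycleType, h, sum_cycleType], fun h => ?_⟩
  rw [cycleType_eq_replicate_of_mul_self_eq_one hσ, cycleType_eq_replicate_of_mul_self_eq_one hτ,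
    h]

end Involution

theorem _root_.Equiv.Perm.card_support_permCongr {α β : Type*} [Fintype α] [DecidableEq α]
    [Fintype β] [DecidableEq β] (e : α ≃ β) (σ : Perm α) :
    #(e.permCongr σ).support = #σ.support := by
  rw [← card_map e.toEmbedding]
  congr 1
  ext x
  simp [Equiv.permCongr_apply, ← e.eq_symm_apply]

section Centralizer

variable {G H : Type*} [Group G] [Group H]

theorem _root_.Subgroup.map_centralizer_singleton (Φ : G ≃* H) (g : G) :
    (Subgroup.centralizer {g}).map Φ.toMonoidHom = Subgroup.centralizer {Φ g} := by
  ext x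
  rw [Subgroup.mem_map_equiv, Subgroup.mem_centralizer_singleton_iff,
    Subgroup.mem_centralizer_singleton_iff, ← Φ.injective.eq_iff, map_mul, map_mul,
    MulEquiv.apply_symm_apply]

noncomputable def _root_.MulEquiv.centralizerSingletonCongr (Φ : G ≃* H) {g : G} {h : H}
    (hg : Φ g = h) : Subgroup.centralizer {g} ≃* Subgroup.centralizer {h} :=
  (Φ.subgroupMap _).trans <| MulEquiv.subgroupCongr <| by
    rw [← hg, ← Subgroup.map_centralizer_singleton]
    rfl

end Centralizer

local notation "C₂" => Multiplicative (ZMod 2)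

@[simps]
def wreathPerm {w : ℕ} (f : Fin w → C₂) (σ : Perm (Fin w)) : Perm (Fin w × C₂) where
  toFun p := (σ p.1, f (σ p.1) * p.2)
  invFun p := (σ⁻¹ p.1, (f p.1)⁻¹ * p.2)
  left_inv p := by simp [← mul_assoc]
  right_inv p := by simp [← mul_assoc]

def wreathToPerm (w : ℕ) : Wreath w →* Perm (Fin w × C₂) where
  toFun x := wreathPerm x.left x.right
  map_one' := by ext p <;> simp
  map_mul' x y := by
    ext p
    · simp [Perm.mul_apply]
    · simp [Perm.mul_apply, permHom, mul_assoc]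

theorem wreathToPerm_injective (w : ℕ) : Function.Injective (wreathToPerm w) := by
  intro x y h
  have key (i : Fin w) : (x.right i, x.left (x.right i)) = (y.right i, y.left (y.right i)) := by
    simpa [wreathToPerm] using congrArg (fun σ : Perm (Fin w × C₂) => σ (i, 1)) h
  have hright : x.right = y.right := Equiv.ext fun i => congrArg Prod.fst (key i)
  refine SemidirectProduct.ext (funext fun j => ?_) hright
  simpa [hright] using congrArg Prod.snd (key (y.right⁻¹ j))

def modelInvolution (w m : ℕ) : Perm (Fin w × C₂ ⊕ Fin m) :=
  Perm.sumCongr ((Equiv.refl _).prodCongr (Equiv.mulLeft (Multiplicative.ofAdd 1))) 1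

theorem modelInvolution_mul_self (w m : ℕ) : modelInvolution w m * modelInvolution w m = 1 := by
  ext (⟨i, a⟩ | k)
  · simp [modelInvolution, ← mul_assoc]
    decide
  · rfl

theorem support_modelInvolution (w m : ℕ) :
    (modelInvolution w m).support = univ.map Function.Embedding.inl := by
  ext (⟨i, a⟩ | k) <;> simp [modelInvolution]

theorem card_support_modelInvolution (w m : ℕ) : #(modelInvolution w m).support = 2 * w := by
  simp [support_modelInvolution, mul_comm]

theorem nat_card_centralizer_modelInvolution (w m : ℕ) :
    Nat.card (Subgroup.centralizer {modelInvolution w m}) =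
      Nat.card (Wreath w × Perm (Fin m)) := by
  rw [nat_card_centralizer,
    cycleType_eq_replicate_of_mul_self_eq_one (modelInvolution_mul_self w m),
    card_support_modelInvolution]
  simp only [Nat.card_prod, SemidirectProduct.card, Nat.card_perm, Nat.card_fun]
  rcases eq_or_ne w 0 with rfl | hw
  · simp
  · simp [hw]
    ring

def modelHom (w m : ℕ) : Wreath w × Perm (Fin m) →* Perm (Fin w × C₂ ⊕ Fin m) :=
  (sumCongrHom _ _).comp ((wreathToPerm w).prodMap (MonoidHom.id _))

theorem modelHom_injective (w m : ℕ) : Function.Injective (modelHom w m) :=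
  sumCongrHom_injective.comp
    (Prod.map_injective.mpr ⟨wreathToPerm_injective w, Function.injective_id⟩)

theorem range_modelHom_le (w m : ℕ) :
    (modelHom w m).range ≤ Subgroup.centralizer {modelInvolution w m} := by
  rintro _ ⟨⟨x, τ⟩, rfl⟩
  rw [Subgroup.mem_centralizer_singleton_iff]
  ext (⟨i, a⟩ | k)
  · simp [modelHom, modelInvolution, wreathToPerm, mul_left_comm]
  · rfl

theorem range_modelHom (w m : ℕ) :
    (modelHom w m).range = Subgroup.centralizer {modelInvolution w m} := by
  refine Subgroup.eq_of_le_of_card_ge (range_modelHom_le w m) ?_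
  rw [nat_card_centralizer_modelInvolution]
  exact (Nat.card_congr (MonoidHom.ofInjective (modelHom_injective w m)).toEquiv).le

noncomputable def centralizerModelInvolutionEquiv (w m : ℕ) :
    Subgroup.centralizer {modelInvolution w m} ≃* Wreath w × Perm (Fin m) :=
  ((MonoidHom.ofInjective (modelHom_injective w m)).trans
    (MulEquiv.subgroupCongr (range_modelHom w m))).symm

section Transport

variable {α : Type*} [Fintype α] [DecidableEq α]

noncomputable def modelEquiv {w m : ℕ} (hα : Fintype.card α = 2 * w + m) :
    Fin w × C₂ ⊕ Fin m ≃ α :=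
  Fintype.equivOfCardEq (by simp [hα, mul_comm])

theorem exists_mul_self_eq_one_card_support_eq {w : ℕ} (hw : 2 * w ≤ Fintype.card α) :
    ∃ π : Perm α, π * π = 1 ∧ #π.support = 2 * w := by
  let e := modelEquiv (α := α) (w := w) (m := Fintype.card α - 2 * w) (by omega)
  refine ⟨e.permCongrHom (modelInvolution w _), ?_, ?_⟩
  · rw [← map_mul, modelInvolution_mul_self, map_one]
  · rw [permCongrHom_coe, card_support_permCongr, card_support_modelInvolution]

theorem exists_mulEquiv_map_modelInvolution {π : Perm α} (hπ : π * π = 1) {w m : ℕ}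
    (hsupp : #π.support = 2 * w) (hα : Fintype.card α = 2 * w + m) :
    ∃ Φ : Perm (Fin w × C₂ ⊕ Fin m) ≃* Perm α, Φ (modelInvolution w m) = π := by
  let e := modelEquiv hα
  have hconj : IsConj (e.permCongrHom (modelInvolution w m)) π := by
    refine (isConj_iff_card_support_eq_of_mul_self_eq_one ?_ hπ).2 ?_
    · rw [← map_mul, modelInvolution_mul_self, map_one]
    · rw [permCongrHom_coe, card_support_permCongr, card_support_modelInvolution, hsupp]
  obtain ⟨c, hc⟩ := isConj_iff.1 hconj
  exact ⟨e.permCongrHom.trans (MulAut.conj c), hc⟩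

end Transport

theorem statement19 (n : ℕ) :
    -- isometric (= conjugate) iff the same number of 2-cycles
    (∀ π π' : Equiv.Perm (Fin n), π * π = 1 → π' * π' = 1 →
      (IsConj π π' ↔ π.support.card = π'.support.card)) ∧
    -- every symmetric form has a Witt index `0 ≤ w ≤ ⌊n/2⌋`
    (∀ π : Equiv.Perm (Fin n), π * π = 1 →
      ∃ w : ℕ, w ≤ n / 2 ∧ π.support.card = 2 * w) ∧
    -- every `0 ≤ w ≤ ⌊n/2⌋` arises as the Witt index of a symmetric form
    (∀ w : ℕ, w ≤ n / 2 →
      ∃ π : Equiv.Perm (Fin n), π * π = 1 ∧ π.support.card = 2 * w) ∧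
    -- the isometry group of the form of Witt index `w` is `(ℤ/2 ≀ S_w) × S_{n−2w}`
    (∀ (π : Equiv.Perm (Fin n)) (w : ℕ), π * π = 1 → π.support.card = 2 * w →
      Nonempty (Subgroup.centralizer ({π} : Set (Equiv.Perm (Fin n))) ≃*
        Wreath w × Equiv.Perm (Fin (n - 2 * w)))) := by
  have card_support_le (π : Perm (Fin n)) : #π.support ≤ n := by
    simpa using card_le_univ π.support
  refine ⟨fun π π' hπ hπ' => isConj_iff_card_support_eq_of_mul_self_eq_one hπ hπ',
    fun π hπ => ?_, fun w hw => exists_mul_self_eq_one_card_support_eq (by simp; omega),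
    fun π w hπ hsupp => ?_⟩
  · obtain ⟨w, hw⟩ := two_dvd_card_support (σ := π) (by rwa [sq])
    exact ⟨w, by have := card_support_le π; omega, hw⟩
  · obtain ⟨Φ, hΦ⟩ := exists_mulEquiv_map_modelInvolution (m := n - 2 * w) hπ hsupp
      (by have := card_support_le π; simp; omega)
    exact ⟨(Φ.centralizerSingletonCongr hΦ).symm.trans (centralizerModelInvolutionEquiv w _)⟩

end WreathStmt
end
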